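/- arXiv:1208.6517 — 3 statements merged into one kernel-verified Lean document; each statement's English description precedes it below -/
import Mathlib

section
/- Let R be a commutative ring, let I ⊆ J be ideals of R, and let f ∈ R be an element such that I : (f) = I (that is, f is a nonzerodivisor on R/I). Then the colon ideal (I + f·J) : (I + (f)) equals J. (This is the key computation showing that the ideal (I, f) is directly linked to J by the ideal I + f·J.) -/
/-! `J·(I + (f)) ⊆ I + f·J` holds for any ideals. Conversely, if `r (I + (f)) ⊆ I + f·J`, then
`r f = i + f z` with `i ∈ I` and `z ∈ J`, so `(r - z) f ∈ I`; as `f` is a nonzerodivisor on `R/I`,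
`r - z ∈ I ⊆ J`, whence `r ∈ J`. -/

namespace Ideal

theorem le_sup_mul_colon_sup {R : Type*} [CommSemiring R] (I K J : Ideal R) :
    J ≤ (I + K * J).colon (I + K : Ideal R) := by
  intro j hj
  have hmul : J * (I + K) ≤ I + K * J := by
    rw [mul_add, mul_comm J K]
    exact add_le_add mul_le_right le_rfl
  exact Submodule.mem_colon.mpr fun p hp ↦ hmul (mul_mem_mul hj hp)

theorem sup_span_singleton_mul_colon_span_singleton_le {R : Type*} [CommRing R]
    {I J : Ideal R} {f : R} (hf : I.colon (span {f}) ≤ J) :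
    (I + span {f} * J).colon (span {f}) ≤ J := by
  intro r hr
  obtain ⟨i, hi, _, hy, hiy⟩ := Submodule.mem_sup.mp (mem_colon_span_singleton.mp hr)
  obtain ⟨z, hz, rfl⟩ := mem_span_singleton_mul.mp hy
  have hrz : r - z ∈ I.colon (span {f}) := by
    rw [mem_colon_span_singleton, show (r - z) * f = i by linear_combination -hiy]
    exact hi
  simpa using J.add_mem (hf hrz) hz

end Ideal

/-- Let `R` be a commutative ring, `I ⊆ J` ideals, and `f ∈ R` with `I : (f) = I`
(i.e. `f` is a nonzerodivisor on `R/I`). Then `(I + f·J) : (I + (f)) = J`. -/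
theorem colon_of_link {R : Type*} [CommRing R] (I J : Ideal R) (hIJ : I ≤ J)
    (f : R) (hf : I.colon (Ideal.span {f}) = I) :
    (I + Ideal.span {f} * J).colon (I + Ideal.span {f}) = J := by
  refine le_antisymm ?_ (Ideal.le_sup_mul_colon_sup I _ J)
  calc (I + Ideal.span {f} * J).colon (I + Ideal.span {f} : Ideal R)
      ≤ (I + Ideal.span {f} * J).colon (Ideal.span {f}) :=
        Submodule.colon_mono le_rfl (SetLike.coe_subset_coe.mpr le_sup_right)
    _ ≤ J := Ideal.sup_span_singleton_mul_colon_span_singleton_le (hf.le.trans hIJ)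
end

section
/- Let R be a commutative ring, let J be an ideal of R, let a ∈ J, and let f ∈ R be an element such that J : (f) = J (that is, f is a nonzerodivisor on R/J). Then f·J + (a) = J ∩ ((a) + (f)). (This is the ideal-theoretic identity underlying the basic double link I_Y = Q·I_C + ⟨F⟩ = I_C ∩ ⟨F, Q⟩ used in the proof of Theorem 3.2.) -/
namespace Ideal

variable {R : Type*} [CommRing R]

theorem inf_span_singleton_eq_span_singleton_mul_colon (J : Ideal R) (f : R) :
    J ⊓ span {f} = span {f} * J.colon (span {f}) := by
  ext x
  simp only [mem_inf, mem_span_singleton', mem_span_singleton_mul, mem_colon_span_singleton]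
  constructor
  · rintro ⟨hxJ, s, rfl⟩
    exact ⟨s, hxJ, mul_comm f s⟩
  · rintro ⟨s, hsJ, rfl⟩
    exact ⟨by rwa [mul_comm], s, mul_comm s f⟩

end Ideal

/-- Basic double link identity: if `a ∈ J` and `J : (f) = J`, then
`f·J + (a) = J ∩ ((a) + (f))`. -/
theorem basic_double_link {R : Type*} [CommRing R] (J : Ideal R) (a f : R)
    (ha : a ∈ J) (hf : J.colon (Ideal.span {f}) = J) :
    Ideal.span {f} * J + Ideal.span {a} = J ⊓ (Ideal.span {a} + Ideal.span {f}) := by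
  have haJ : Ideal.span {a} ≤ J := (Ideal.span_singleton_le_iff_mem J).mpr ha
  rw [Ideal.add_eq_sup, Ideal.add_eq_sup, inf_comm, sup_inf_assoc_of_le _ haJ, inf_comm,
    J.inf_span_singleton_eq_span_singleton_mul_colon, hf, sup_comm]
end

section
/- Let R be a commutative ring, let I ⊆ J be ideals of R, let S = R[t] be the polynomial ring in one new variable t, and let I·S and J·S denote the extensions of I and J to S. Then the colon ideal (I·S + t·(J·S)) : (I·S + (t)) equals J·S. (This is the direct link, performed in one more variable, that underlies Theorem 2.3: the ideal (I·S, t), which defines X viewed in the larger projective space, is directly linked to J·S by the ideal I·S + t·J·S.) -/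
/-!
The inclusion `J·S ⊆ colon` is formal. Conversely, if `f·t = a + t·b` with `a ∈ I·S` and
`b ∈ J·S`, then `t·(f - b) = a ∈ I·S`; since `I·S` consists of the polynomials with
coefficients in `I`, `t` is a nonzerodivisor modulo `I·S`, so `f - b ∈ I·S ⊆ J·S`.
-/

open Polynomial Ideal

theorem Ideal.le_colon_add_mul {S : Type*} [CommRing S] (a b c : Ideal S) :
    b ≤ (a + c * b).colon (a + c) := by
  intro g hg
  rw [Submodule.mem_colon]
  intro p hp
  obtain ⟨x, hx, y, hy, rfl⟩ := Submodule.mem_sup.mp hp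
  rw [smul_eq_mul, mul_add]
  exact add_mem (Submodule.mem_sup_left (mul_mem_left _ g hx))
    (Submodule.mem_sup_right (mul_comm y g ▸ mul_mem_mul hy hg))

namespace Polynomial

variable {R : Type*} [CommRing R]

theorem X_mul_mem_map_C_iff {I : Ideal R} {p : R[X]} : X * p ∈ I.map C ↔ p ∈ I.map C := by
  refine ⟨fun h => mem_map_C_iff.mpr fun n => ?_, mul_mem_left _ X⟩
  simpa only [coeff_X_mul] using mem_map_C_iff.mp h (n + 1)

theorem mem_map_C_add_of_X_mul_mem {I : Ideal R} {K : Ideal R[X]} {f : R[X]}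
    (hf : X * f ∈ I.map C + span {X} * K) : f ∈ I.map C + K := by
  obtain ⟨a, ha, z, hz, hsum⟩ := Submodule.mem_sup.mp hf
  obtain ⟨b, hb, rfl⟩ := mem_span_singleton_mul.mp hz
  have hfb : f - b ∈ I.map C := X_mul_mem_map_C_iff.mp <| by
    rwa [mul_sub, ← hsum, add_sub_cancel_right]
  rw [Ideal.add_eq_sup, ← sub_add_cancel f b]
  exact Submodule.add_mem_sup hfb hb

end Polynomial

/-- Let `I ⊆ J` be ideals of `R` and `S = R[t]`. Then
`(I·S + t·(J·S)) : (I·S + (t)) = J·S`. -/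
theorem link_in_one_more_variable {R : Type*} [CommRing R] (I J : Ideal R) (hIJ : I ≤ J) :
    (Ideal.map (Polynomial.C : R →+* Polynomial R) I +
        Ideal.span {(Polynomial.X : Polynomial R)} *
          Ideal.map (Polynomial.C : R →+* Polynomial R) J).colon
      (Ideal.map (Polynomial.C : R →+* Polynomial R) I +
        Ideal.span {(Polynomial.X : Polynomial R)}) =
      Ideal.map (Polynomial.C : R →+* Polynomial R) J := by
  refine le_antisymm (fun f hf => ?_) (le_colon_add_mul _ _ _)
  have hXf := Submodule.mem_colon.mp hf X (Submodule.mem_sup_right (mem_span_singleton_self X))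
  rw [smul_eq_mul, mul_comm f X] at hXf
  exact (add_le (map_mono hIJ) le_rfl : I.map C + J.map C ≤ J.map C)
    (mem_map_C_add_of_X_mul_mem hXf)
end
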